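/- arXiv:2006.01825 — 3 statements merged into one kernel-verified Lean document; each statement's English description precedes it below -/
import Mathlib

section
/- Let Σ be partitioned into nonempty subsets Σ₀ and Σ₁ and let S be a finite sequence over Σ. Define B[i] = 0 iff S[i] ∈ Σ₀, let S₀ be the subsequence of S of symbols in Σ₀, and S₁ the subsequence of symbols in Σ₁. Then for every c ∈ Σ₀ and every position i, rank_c(S, i) = rank_c(S₀, rank₀(B, i)), where rank_c(X, i) counts occurrences of c in the first i positions of X. -/
lemma wavelet_aux {A : Type*} [DecidableEq A] (p : A → Bool) (c : A) (hc : p c = true) :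
    ∀ (S : List A) (i : ℕ),
      (S.take i).count c = ((S.filter p).take ((S.take i).countP p)).count c := by
  intro S
  induction S with
  | nil => intro i; simp
  | cons a S ih =>
    intro i
    cases i with
    | zero => simp
    | succ n =>
      simp only [List.take_succ_cons, List.filter_cons, List.countP_cons]
      by_cases hp : p a
      · simp [hp, List.count_cons, ih n]
      · have hac : a ≠ c := by rintro rfl; exact hp hc
        simp [hp, List.count_cons, hac, ih n]

/-- wavelet tree rank identity. If `Σ₀, Σ₁` (Sig0, Sig1) partition the alphabet,
`S₀` is the subsequence of `S` of symbols in `Σ₀`, and `B[i] = 0` iff `S[i] ∈ Σ₀`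
(so `rank₀(B, i)` is the number of first-`i` positions of `S` whose symbol lies
in `Σ₀`), then for every `c ∈ Σ₀` and every `i`,
`rank_c(S, i) = rank_c(S₀, rank₀(B, i))`. -/
theorem wavelet_tree_rank
    {A : Type*} [DecidableEq A]
    (Sig0 Sig1 : Set A) [DecidablePred (· ∈ Sig0)]
    (hcover : Sig0 ∪ Sig1 = Set.univ) (hdisj : Disjoint Sig0 Sig1)
    (h0 : Sig0.Nonempty) (h1 : Sig1.Nonempty)
    (S : List A) (c : A) (hc : c ∈ Sig0) (i : ℕ) :
    (S.take i).count c
      = ((S.filter (fun x => decide (x ∈ Sig0))).take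
          ((S.take i).countP (fun x => decide (x ∈ Sig0)))).count c := by
  exact wavelet_aux _ c (by simpa using hc) S i
end

section
/- With the same setup (partition Σ = Σ₀ ∪ Σ₁, bitvector B, subsequences S₀, S₁), for every c ∈ Σ₀ and every k, select_c(S, k) = select₀(B, select_c(S₀, k)), where select_c(X, k) is the position of the k-th occurrence of c in X (when it exists). -/
/-!
Rank and select are adjoint: `select l p k ≤ i ↔ k ≤ rank l p i`, where
`rank l p i = (l.take i).countP p`. Since `p` implies `q`, the `p`-rank in `S` at `i` is the
`p`-rank in `S.filter q` at the `q`-rank of `i`; composing the two adjunctions shows that both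
sides of the identity have the same upper sets, hence are equal.
-/

/-- The position of the `k`-th occurrence (among the symbols satisfying `p`)
in the list `l`: the least `i` such that the first `i` positions of `l` contain
exactly `k` symbols satisfying `p`. -/
noncomputable def listSelect {A : Type*} (l : List A) (p : A → Bool) (k : ℕ) : ℕ :=
  sInf {i | (l.take i).countP p = k}

namespace List

variable {A : Type*}

theorem countP_take_mono (l : List A) (p : A → Bool) {i j : ℕ} (h : i ≤ j) :
    (l.take i).countP p ≤ (l.take j).countP p := by
  rw [← min_eq_left h, ← take_take]
  exact (take_sublist i _).countP_le

theorem exists_countP_take_eq (p : A → Bool) :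
    ∀ {l : List A} {k : ℕ}, k ≤ l.countP p → ∃ n, (l.take n).countP p = k
  | [], _, hk => ⟨0, by simp_all⟩
  | _ :: _, 0, _ => ⟨0, by simp⟩
  | a :: t, k + 1, hk => by
    by_cases hpa : p a = true
    · obtain ⟨n, hn⟩ := exists_countP_take_eq p (l := t) (k := k)
        (by rw [countP_cons_of_pos hpa] at hk; omega)
      exact ⟨n + 1, by rw [take_succ_cons, countP_cons_of_pos hpa, hn]⟩
    · obtain ⟨n, hn⟩ := exists_countP_take_eq p (l := t) (k := k + 1)
        (by rwa [countP_cons_of_neg hpa] at hk)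
      exact ⟨n + 1, by rw [take_succ_cons, countP_cons_of_neg hpa, hn]⟩

theorem take_countP_take_filter (l : List A) (q : A → Bool) (i : ℕ) :
    (l.filter q).take ((l.take i).countP q) = (l.take i).filter q := by
  rw [← take_append_drop i l, filter_append, take_append_drop]
  exact take_left' countP_eq_length_filter.symm

theorem countP_filter_of_imp {p q : A → Bool} (hpq : ∀ x, p x → q x) (l : List A) :
    (l.filter q).countP p = l.countP p := by
  rw [countP_filter]
  refine countP_congr fun x _ => ?_
  cases hp : p x <;> simp [hpq x, hp]

theorem countP_take_countP_filter {p q : A → Bool} (hpq : ∀ x, p x → q x) (l : List A)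
    (i : ℕ) : ((l.filter q).take ((l.take i).countP q)).countP p = (l.take i).countP p := by
  rw [take_countP_take_filter, countP_filter_of_imp hpq]

end List

section Select

variable {A : Type*}

theorem listSelect_le_iff {l : List A} {p : A → Bool} {k : ℕ} (hk : k ≤ l.countP p) (i : ℕ) :
    listSelect l p k ≤ i ↔ k ≤ (l.take i).countP p := by
  constructor
  · intro h
    obtain ⟨n, hn⟩ := List.exists_countP_take_eq p hk
    have hsel : (l.take (listSelect l p k)).countP p = k :=
      Nat.sInf_mem (s := {j | (l.take j).countP p = k}) ⟨n, hn⟩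
    exact hsel ▸ List.countP_take_mono l p h
  · intro h
    obtain ⟨n, hn⟩ := List.exists_countP_take_eq p h
    rw [List.take_take] at hn
    exact (Nat.sInf_le (s := {j | (l.take j).countP p = k}) hn).trans (min_le_right n i)

theorem listSelect_le_length {l : List A} {p : A → Bool} {k : ℕ} (hk : k ≤ l.countP p) :
    listSelect l p k ≤ l.length :=
  (listSelect_le_iff hk _).2 (by rwa [List.take_length])

theorem listSelect_eq_listSelect_listSelect_filter {l : List A} {p q : A → Bool}
    (hpq : ∀ x, p x → q x) {k : ℕ} (hk : k ≤ l.countP p) :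
    listSelect l p k = listSelect l q (listSelect (l.filter q) p k) := by
  have hk_filter : k ≤ (l.filter q).countP p := List.countP_filter_of_imp hpq l ▸ hk
  have hsel : listSelect (l.filter q) p k ≤ l.countP q :=
    List.countP_eq_length_filter ▸ listSelect_le_length hk_filter
  refine eq_of_forall_ge_iff fun i => ?_
  rw [listSelect_le_iff hk, listSelect_le_iff hsel, listSelect_le_iff hk_filter,
    List.countP_take_countP_filter hpq]

end Select

theorem wavelet_tree_select_general
    {A : Type*} [DecidableEq A]
    (Sig0 : Set A) [DecidablePred (· ∈ Sig0)]
    (S : List A) (c : A) (hc : c ∈ Sig0)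
    (k : ℕ) (hk2 : k ≤ S.count c) :
    listSelect S (fun x => decide (x = c)) k
      = listSelect S (fun x => decide (x ∈ Sig0))
          (listSelect (S.filter (fun x => decide (x ∈ Sig0)))
            (fun x => decide (x = c)) k) :=
  listSelect_eq_listSelect_listSelect_filter (by simp_all) hk2

/-- wavelet tree select identity. With `Σ₀, Σ₁` (Sig0, Sig1) partitioning the
alphabet, `S₀` the subsequence of `S` of symbols in `Σ₀`, and `B[i] = 0` iff
`S[i] ∈ Σ₀` (so `select₀(B, j)` is the position of the `j`-th position of `S`
carrying a symbol of `Σ₀`), for every `c ∈ Σ₀` and every valid `k`,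
`select_c(S, k) = select₀(B, select_c(S₀, k))`. -/
theorem wavelet_tree_select
    {A : Type*} [DecidableEq A]
    (Sig0 Sig1 : Set A) [DecidablePred (· ∈ Sig0)]
    (hcover : Sig0 ∪ Sig1 = Set.univ) (hdisj : Disjoint Sig0 Sig1)
    (h0 : Sig0.Nonempty) (h1 : Sig1.Nonempty)
    (S : List A) (c : A) (hc : c ∈ Sig0)
    (k : ℕ) (hk1 : 1 ≤ k) (hk2 : k ≤ S.count c) :
    listSelect S (fun x => decide (x = c)) k
      = listSelect S (fun x => decide (x ∈ Sig0))
          (listSelect (S.filter (fun x => decide (x ∈ Sig0)))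
            (fun x => decide (x = c)) k) :=
  wavelet_tree_select_general Sig0 S c hc k hk2
end

section
/- Let A[1..n] be an array and C its previous-occurrence array (C[i] = largest j < i with A[j] = A[i], or 0). The following recursive procedure reports exactly the set of leftmost occurrences of distinct values in A[ℓ..r]: find the position m of the minimum of C in [ℓ..r]; if C[m] ≥ ℓ, stop; otherwise report m and recurse on [ℓ..m−1] and [m+1..r]. The procedure reports each distinct value of A[ℓ..r] exactly once. -/
/-- Muthukrishnan's recursive reporting procedure on interval `[l..r]`
(1-indexed positions) with threshold `L`: query the range-minimum position
`m = rmq l r` of `C` in `[l..r]`; if `C m ≥ L` stop, otherwise report `m` and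
recurse on `[l..m-1]` and `[m+1..r]`. (The guard `l ≤ rmq l r ≤ r` is
satisfied by any correct range-minimum query.) -/
def muthuReports (C : ℕ → ℕ) (rmq : ℕ → ℕ → ℕ) (L : ℕ) : ℕ → ℕ → Finset ℕ
  | l, r =>
    if h : 1 ≤ l ∧ l ≤ r ∧ l ≤ rmq l r ∧ rmq l r ≤ r then
      if C (rmq l r) < L then
        insert (rmq l r)
          (muthuReports C rmq L l (rmq l r - 1) ∪ muthuReports C rmq L (rmq l r + 1) r)
      else ∅
    else ∅
  termination_by l r => r + 1 - l
  decreasing_by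
  · obtain ⟨h0, h1, h2, h3⟩ := h
    rw [Nat.sub_add_cancel (le_trans h0 h2)]
    omega
  · obtain ⟨h0, h1, h2, h3⟩ := h
    omega

lemma muthu_aux (C : ℕ → ℕ) (rmq : ℕ → ℕ → ℕ) (ℓ : ℕ) (hℓ : 1 ≤ ℓ)
    (hrmq : ∀ l r, l ≤ r →
      (l ≤ rmq l r ∧ rmq l r ≤ r) ∧ ∀ j, l ≤ j → j ≤ r → C (rmq l r) ≤ C j) :
    ∀ N l r, r + 1 - l ≤ N → ℓ ≤ l →
      muthuReports C rmq ℓ l r = (Finset.Icc l r).filter (fun i => C i < ℓ) := by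
  intro N
  induction N with
  | zero =>
    intro l r hN hl
    rw [muthuReports, dif_neg (by omega), Finset.Icc_eq_empty (by omega)]
    simp
  | succ N ih =>
    intro l r hN hl
    rw [muthuReports]
    by_cases hlr : l ≤ r
    · have h1l : 1 ≤ l := le_trans hℓ hl
      obtain ⟨⟨hm1, hm2⟩, hmin⟩ := hrmq l r hlr
      rw [dif_pos ⟨h1l, hlr, hm1, hm2⟩]
      set m := rmq l r with hm
      by_cases hcm : C m < ℓ
      · rw [if_pos hcm,
          ih l (m - 1) (by omega) hl, ih (m + 1) r (by omega) (by omega)]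
        ext i
        simp only [Finset.mem_insert, Finset.mem_union, Finset.mem_filter, Finset.mem_Icc]
        constructor
        · rintro (rfl | ⟨⟨h1, h2⟩, h3⟩ | ⟨⟨h1, h2⟩, h3⟩) <;>
            exact ⟨⟨by omega, by omega⟩, by assumption⟩
        · rintro ⟨⟨h1, h2⟩, h3⟩
          by_cases hi : i = m
          · exact Or.inl hi
          · by_cases hi2 : i < m
            · exact Or.inr (Or.inl ⟨⟨h1, by omega⟩, h3⟩)
            · exact Or.inr (Or.inr ⟨⟨by omega, h2⟩, h3⟩)
      · rw [if_neg hcm]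
        symm
        rw [Finset.filter_eq_empty_iff]
        intro i hi
        simp only [Finset.mem_Icc] at hi
        have := hmin i hi.1 hi.2
        omega
    · rw [dif_neg (by omega), Finset.Icc_eq_empty (by omega)]
      simp

/-- the procedure reports exactly the positions
`{ i ∈ [ℓ..r] : C i < ℓ }`, i.e. the leftmost occurrences in `A[ℓ..r]` of the
distinct values of `A[ℓ..r]`; in particular each distinct value of `A[ℓ..r]`
is reported exactly once. -/
theorem muthuReports_correct
    (A C : ℕ → ℕ) (rmq : ℕ → ℕ → ℕ)
    (hC : ∀ i, C i = sSup {j | 1 ≤ j ∧ j < i ∧ A j = A i})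
    (hrmq : ∀ l r, l ≤ r →
      (l ≤ rmq l r ∧ rmq l r ≤ r) ∧ ∀ j, l ≤ j → j ≤ r → C (rmq l r) ≤ C j)
    (ℓ r : ℕ) (hℓ : 1 ≤ ℓ) (hlr : ℓ ≤ r) :
    muthuReports C rmq ℓ ℓ r = (Finset.Icc ℓ r).filter (fun i => C i < ℓ) ∧
    Set.InjOn A ↑(muthuReports C rmq ℓ ℓ r) ∧
    A '' ↑(muthuReports C rmq ℓ ℓ r) = {v | ∃ i, ℓ ≤ i ∧ i ≤ r ∧ A i = v} := by
  have heq := muthu_aux C rmq ℓ hℓ hrmq (r + 1 - ℓ) ℓ r le_rfl le_rfl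
  refine ⟨heq, ?_, ?_⟩
  · -- injectivity
    have key : ∀ i ∈ muthuReports C rmq ℓ ℓ r, ∀ j ∈ muthuReports C rmq ℓ ℓ r,
        i < j → A i = A j → False := by
      intro i hi j hj hij hA
      rw [heq, Finset.mem_filter, Finset.mem_Icc] at hi hj
      have hmem : i ∈ {k | 1 ≤ k ∧ k < j ∧ A k = A j} := ⟨by omega, hij, hA⟩
      have hbdd : BddAbove {k | 1 ≤ k ∧ k < j ∧ A k = A j} :=
        ⟨j, fun x hx => le_of_lt hx.2.1⟩
      have : i ≤ C j := by rw [hC j]; exact le_csSup hbdd hmem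
      omega
    intro i hi j hj hA
    rcases lt_trichotomy i j with h | h | h
    · exact absurd hA (fun hA => key i hi j hj h hA)
    · exact h
    · exact absurd hA.symm (fun hA => key j hj i hi h hA)
  · ext v
    simp only [Set.mem_image, Set.mem_setOf_eq, Finset.coe_sort_coe, Finset.mem_coe]
    constructor
    · rintro ⟨i, hi, rfl⟩
      rw [heq, Finset.mem_filter, Finset.mem_Icc] at hi
      exact ⟨i, hi.1.1, hi.1.2, rfl⟩
    · rintro ⟨i, h1, h2, rfl⟩
      have hex : ∃ k, ℓ ≤ k ∧ k ≤ r ∧ A k = A i := ⟨i, h1, h2, rfl⟩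
      classical
      set j := Nat.find hex with hj
      obtain ⟨hj1, hj2, hj3⟩ := Nat.find_spec hex
      have hCj : C j < ℓ := by
        by_contra hge
        push_neg at hge
        have hbdd : BddAbove {k | 1 ≤ k ∧ k < j ∧ A k = A j} :=
          ⟨j, fun x hx => le_of_lt hx.2.1⟩
        have hne : {k | 1 ≤ k ∧ k < j ∧ A k = A j}.Nonempty := by
          by_contra hne
          rw [Set.not_nonempty_iff_eq_empty] at hne
          rw [hC j, hne, csSup_empty] at hge
          exact absurd hge (by simpa using by omega)
        have hmem : C j ∈ {k | 1 ≤ k ∧ k < j ∧ A k = A j} := by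
          rw [hC j]; exact Nat.sSup_mem hne hbdd
        obtain ⟨hm1, hm2, hm3⟩ := hmem
        have : j ≤ C j := Nat.find_min' hex ⟨hge, by omega, by rw [hm3, hj3]⟩
        omega
      refine ⟨j, ?_, hj3⟩
      rw [heq, Finset.mem_filter, Finset.mem_Icc]
      exact ⟨⟨hj1, hj2⟩, hCj⟩
end
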